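/- arXiv:2507.16728 — 5 statements merged into one kernel-verified Lean document; each statement's English description precedes it below -/
import Mathlib

section
/- Let c₁, c₂, c₃ ∈ ℝ and define μ₁ = (-ε₁c₁ + ε₂c₂ + ε₃c₃)/2, μ₂ = (ε₁c₁ - ε₂c₂ + ε₃c₃)/2, μ₃ = (ε₁c₁ + ε₂c₂ - ε₃c₃)/2, where ε₁, ε₂, ε₃ ∈ {-1, 1}. Then μ₁μ₂ = μ₂μ₃ = μ₃μ₁ if and only if either ε₁c₁ = ε₂c₂ = ε₃c₃, or two of the μᵢ vanish (equivalently, up to relabeling indices, ε₁c₁ = ε₂c₂ and c₃ = 0). -/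
/-! With `a = ε₁c₁`, `b = ε₂c₂`, `c = ε₃c₃` one has `a = μ₂ + μ₃`, `b = μ₁ + μ₃`, `c = μ₁ + μ₂`,
so `a = b = c` exactly when `μ₁ = μ₂ = μ₃`, and the claim becomes a statement about three
elements of a domain: `μ₁μ₂ - μ₂μ₃ = μ₂(μ₁ - μ₃)` and `μ₂μ₃ - μ₃μ₁ = μ₃(μ₂ - μ₁)` both vanish
iff the three are equal or two of them are zero. -/

theorem mul_eq_mul_and_mul_eq_mul_iff {R : Type*} [CommRing R] [NoZeroDivisors R] (a b c : R) :
    (a * b = b * c ∧ b * c = c * a) ↔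
      ((a = b ∧ b = c) ∨ (a = 0 ∧ b = 0) ∨ (b = 0 ∧ c = 0) ∨ (a = 0 ∧ c = 0)) := by
  constructor
  · rintro ⟨hab, hbc⟩
    rcases mul_eq_zero.1 (by linear_combination hab : b * (a - c) = 0) with rfl | hac
    · rcases mul_eq_zero.1 (by linear_combination -hbc : c * a = 0) with rfl | rfl
      · exact .inr <| .inr <| .inl ⟨rfl, rfl⟩
      · exact .inr <| .inl ⟨rfl, rfl⟩
    · obtain rfl := sub_eq_zero.1 hac
      rcases mul_eq_zero.1 (by linear_combination hbc : a * (b - a) = 0) with rfl | hba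
      · exact .inr <| .inr <| .inr ⟨rfl, rfl⟩
      · exact .inl ⟨(sub_eq_zero.1 hba).symm, sub_eq_zero.1 hba⟩
  · rintro (⟨rfl, rfl⟩ | ⟨rfl, rfl⟩ | ⟨rfl, rfl⟩ | ⟨rfl, rfl⟩) <;> constructor <;> ring

theorem stmt0_general (e1 e2 e3 c1 c2 c3 μ1 μ2 μ3 : ℝ)
    (hμ1 : μ1 = (-(e1 * c1) + e2 * c2 + e3 * c3) / 2)
    (hμ2 : μ2 = (e1 * c1 - e2 * c2 + e3 * c3) / 2)
    (hμ3 : μ3 = (e1 * c1 + e2 * c2 - e3 * c3) / 2) :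
    (μ1 * μ2 = μ2 * μ3 ∧ μ2 * μ3 = μ3 * μ1) ↔
      ((e1 * c1 = e2 * c2 ∧ e2 * c2 = e3 * c3) ∨
        (μ1 = 0 ∧ μ2 = 0) ∨ (μ2 = 0 ∧ μ3 = 0) ∨ (μ1 = 0 ∧ μ3 = 0)) := by
  have h12 : μ1 = μ2 ↔ e1 * c1 = e2 * c2 := by constructor <;> intro h <;> linarith
  have h23 : μ2 = μ3 ↔ e2 * c2 = e3 * c3 := by constructor <;> intro h <;> linarith
  rw [mul_eq_mul_and_mul_eq_mul_iff, h12, h23]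

/-- products of the μᵢ all coincide iff either ε₁c₁ = ε₂c₂ = ε₃c₃
or two of the μᵢ vanish. -/
theorem stmt0 (e1 e2 e3 c1 c2 c3 μ1 μ2 μ3 : ℝ)
    (he1 : e1 = 1 ∨ e1 = -1) (he2 : e2 = 1 ∨ e2 = -1) (he3 : e3 = 1 ∨ e3 = -1)
    (hμ1 : μ1 = (-(e1 * c1) + e2 * c2 + e3 * c3) / 2)
    (hμ2 : μ2 = (e1 * c1 - e2 * c2 + e3 * c3) / 2)
    (hμ3 : μ3 = (e1 * c1 + e2 * c2 - e3 * c3) / 2) :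
    (μ1 * μ2 = μ2 * μ3 ∧ μ2 * μ3 = μ3 * μ1) ↔
      ((e1 * c1 = e2 * c2 ∧ e2 * c2 = e3 * c3) ∨
        (μ1 = 0 ∧ μ2 = 0) ∨ (μ2 = 0 ∧ μ3 = 0) ∨ (μ1 = 0 ∧ μ3 = 0)) :=
  stmt0_general e1 e2 e3 c1 c2 c3 μ1 μ2 μ3 hμ1 hμ2 hμ3
end

section
/- Let Σ be a Riemannian or Lorentzian surface with rotation operator J satisfying J² = -ε₁ε₂·id and ⟨Ju,Jv⟩ = ε₁ε₂⟨u,v⟩, and let ν₁, ν₂, ν₃ be smooth functions with ε₁ν₁² + ε₂ν₂² + ε₃ν₃² = ε₃. Define X₁ = J∇ν₁ + ε₂ε₃(ν₃∇ν₂ - ν₂∇ν₃), X₂ = J∇ν₂ + ε₃ε₁(ν₁∇ν₃ - ν₃∇ν₁), X₃ = J∇ν₃ + ε₁ε₂(ν₂∇ν₁ - ν₁∇ν₂). Then (ε_β - ε₃ν_β²)⟨X_α, X_α⟩ = (ε_α - ε₃ν_α²)⟨X_β, X_β⟩ for all α, β ∈ {1,2,3}. -/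
/-!
Indices 1, 2, 3 of the paper are `0, 1, 2 : Fin 3` here.

Differentiating ε₁ν₁² + ε₂ν₂² + ε₃ν₃² = ε₃ shows that N = Σ εᵢνᵢ∇νᵢ lies in the radical of
⟨·,·⟩, hence also in that of the alternating form ⟨J·,·⟩ (J is skew, being conformal with
J² = -ε₁ε₂). For the alternating form this forces ⟨J∇ν₂, ∇ν₃⟩ to be proportional to ε₁ν₁; for
the symmetric one it relates ⟨∇ν₁, ∇ν₁⟩ to the square of ν₃∇ν₂ - ν₂∇ν₃. Expanding ⟨X₁, X₁⟩
with these two relations gives, with c = ε₃,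
  c ε₁ ⟨X₁, X₁⟩ = ε₁ε₂ε₃ (c - ε₁ν₁²) ψ,  ψ = c Σᵢ εᵢ⟨∇νᵢ, ∇νᵢ⟩ + 2 Σᵢ νᵢ₊₂⟨J∇νᵢ, ∇νᵢ₊₁⟩.
Treating c as a free constant makes all hypotheses and ψ invariant under cyclic relabelling of
the indices, so the same identity holds for every α; finally c ε_α (c - ε_α ν_α²) = ε_α - ε₃ν_α².
-/

theorem sum_smul_fderiv_eq_zero_of_sum_sq_const {E ι : Type*} [NormedAddCommGroup E]
    [NormedSpace ℝ E] [Fintype ι] {ε : ι → ℝ} {ν : ι → E → ℝ} {c : ℝ}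
    (hν : ∀ i, Differentiable ℝ (ν i)) (h : ∀ p, ∑ i, ε i * ν i p ^ 2 = c) (p : E) :
    ∑ i, (ε i * ν i p) • fderiv ℝ (ν i) p = 0 := by
  have hderiv : HasFDerivAt (fun q ↦ ∑ i, ε i * ν i q ^ 2)
      (∑ i, ε i • ((2 : ℕ) • ν i p ^ (2 - 1)) • fderiv ℝ (ν i) p) p :=
    HasFDerivAt.fun_sum fun i _ ↦ ((hν i p).hasFDerivAt.pow 2).const_mul (ε i)
  have hconst : HasFDerivAt (fun q ↦ ∑ i, ε i * ν i q ^ 2) (0 : E →L[ℝ] ℝ) p := by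
    simp_rw [h]; exact hasFDerivAt_const c p
  calc ∑ i, (ε i * ν i p) • fderiv ℝ (ν i) p
      = (2⁻¹ : ℝ) • ∑ i, ε i • ((2 : ℕ) • ν i p ^ (2 - 1)) • fderiv ℝ (ν i) p := by
        rw [Finset.smul_sum]
        exact Finset.sum_congr rfl fun i _ ↦ by module
    _ = 0 := by rw [hderiv.unique hconst, smul_zero]

section

variable {V : Type*} [AddCommGroup V] [Module ℝ V]

namespace LinearMap.BilinForm

theorem apply_self_eq_of_add_mem_ker {g : LinearMap.BilinForm ℝ V} (hg : ∀ u v, g u v = g v u)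
    {x y : V} (h : g (x + y) = 0) : g x x = g y y := by
  have hx := LinearMap.congr_fun h x
  have hy := LinearMap.congr_fun h y
  simp only [map_add, LinearMap.add_apply, LinearMap.zero_apply] at hx hy
  linarith [hg x y]

theorem apply_map_left_eq_neg_of_sq_eq_neg_smul {g : LinearMap.BilinForm ℝ V} {J : V →ₗ[ℝ] V}
    {k : ℝ} (hk : k ≠ 0) (hsq : ∀ v, J (J v) = -(k • v))
    (hiso : ∀ u v, g (J u) (J v) = k * g u v) (u v : V) : g (J u) v = -g u (J v) := by
  have h := hiso u (J v)
  rw [hsq, map_neg, map_smul, smul_eq_mul] at h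
  exact mul_left_cancel₀ hk (by linarith)

variable {ε ν : Fin 3 → ℝ} {G : Fin 3 → V} {c : ℝ}

theorem apply_cross_cross_of_symm {g : LinearMap.BilinForm ℝ V} (hg : ∀ u v, g u v = g v u)
    (hc : ∑ i, ε i * ν i ^ 2 = c) (hN : g (∑ i, (ε i * ν i) • G i) = 0) :
    c * ε 0 * g (G 0) (G 0) + ε 1 * ε 2 * g (ν 2 • G 1 - ν 1 • G 2) (ν 2 • G 1 - ν 1 • G 2) =
      (c - ε 0 * ν 0 ^ 2) * ∑ i, ε i * g (G i) (G i) := by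
  have h := g.apply_self_eq_of_add_mem_ker hg (x := (ε 0 * ν 0) • G 0)
    (y := (ε 1 * ν 1) • G 1 + (ε 2 * ν 2) • G 2) (by simpa [Fin.sum_univ_three, add_assoc] using hN)
  simp only [Fin.sum_univ_three] at hc ⊢
  simp only [map_add, map_sub, map_smul, LinearMap.add_apply, LinearMap.sub_apply,
    LinearMap.smul_apply, smul_eq_mul] at h ⊢
  subst hc
  linear_combination h

theorem mul_apply_one_two_of_antisymm {β : LinearMap.BilinForm ℝ V} (hβ : ∀ u v, β u v = -β v u)
    (hc : ∑ i, ε i * ν i ^ 2 = c) (hN : β (∑ i, (ε i * ν i) • G i) = 0) :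
    c * β (G 1) (G 2) = ε 0 * ν 0 * ∑ i, ν (i + 2) * β (G i) (G (i + 1)) := by
  have hM : ∀ j, ∑ i, ε i * ν i * β (G i) (G j) = 0 := fun j ↦ by
    simpa [map_sum, map_smul] using LinearMap.congr_fun hN (G j)
  simp only [Fin.sum_univ_three, Fin.isValue, Fin.reduceAdd] at hc hM ⊢
  subst hc
  linear_combination ν 1 * hM 2 - ν 2 * hM 1 - ε 0 * ν 0 * ν 1 * hβ (G 2) (G 0)
    + ε 2 * ν 2 ^ 2 * hβ (G 1) (G 2) + ε 1 * ν 1 * ν 2 / 2 * hβ (G 1) (G 1)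
    - ε 2 * ν 1 * ν 2 / 2 * hβ (G 2) (G 2)

theorem mul_apply_cross_of_antisymm {β : LinearMap.BilinForm ℝ V} (hβ : ∀ u v, β u v = -β v u)
    (hc : ∑ i, ε i * ν i ^ 2 = c) (hN : β (∑ i, (ε i * ν i) • G i) = 0) :
    c * β (G 0) (ν 2 • G 1 - ν 1 • G 2) =
      (c - ε 0 * ν 0 ^ 2) * ∑ i, ν (i + 2) * β (G i) (G (i + 1)) := by
  have h := mul_apply_one_two_of_antisymm hβ hc hN
  simp only [Fin.sum_univ_three, Fin.isValue, Fin.reduceAdd] at h ⊢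
  simp only [map_sub, map_smul, smul_eq_mul]
  linear_combination -ν 0 * h - c * ν 1 * hβ (G 0) (G 2)

end LinearMap.BilinForm

section TwistedGradient

variable (g : LinearMap.BilinForm ℝ V) (J : V →ₗ[ℝ] V) (ε ν : Fin 3 → ℝ) (G : Fin 3 → V)

def twistedGradient (α : Fin 3) : V :=
  J (G α) + (ε (α + 1) * ε (α + 2)) • (ν (α + 2) • G (α + 1) - ν (α + 1) • G (α + 2))

def twistedGradientScale (c : ℝ) : ℝ :=
  c * ∑ i, ε i * g (G i) (G i) + 2 * ∑ i, ν (i + 2) * g (J (G i)) (G (i + 1))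

variable {g J ε ν G} {c : ℝ}

theorem mul_apply_twistedGradient_zero (hg : ∀ u v, g u v = g v u)
    (hJ : ∀ u v, g (J u) v = -g u (J v)) (hiso : ∀ u v, g (J u) (J v) = c * (∏ i, ε i) * g u v)
    (hc : ∑ i, ε i * ν i ^ 2 = c) (hN : g (∑ i, (ε i * ν i) • G i) = 0) :
    c * ε 0 * g (twistedGradient J ε ν G 0) (twistedGradient J ε ν G 0) =
      (∏ i, ε i) * (c - ε 0 * ν 0 ^ 2) * twistedGradientScale g J ε ν G c := by
  set w := ν 2 • G 1 - ν 1 • G 2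
  have hX : twistedGradient J ε ν G 0 = J (G 0) + (ε 1 * ε 2) • w := by simp [twistedGradient, w]
  have hβ : ∀ u v, (g ∘ₗ J) u v = -(g ∘ₗ J) v u := fun u v ↦ by
    rw [LinearMap.comp_apply, LinearMap.comp_apply, hJ, hg]
  have hβN : (g ∘ₗ J) (∑ i, (ε i * ν i) • G i) = 0 := by
    ext v; simp only [LinearMap.comp_apply, hJ, hN, LinearMap.zero_apply, neg_zero]
  have hA := g.apply_cross_cross_of_symm hg hc hN
  have hB := LinearMap.BilinForm.mul_apply_cross_of_antisymm hβ hc hβN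
  simp only [LinearMap.comp_apply] at hB
  rw [hX, twistedGradientScale]
  simp only [map_add, map_smul, LinearMap.add_apply, LinearMap.smul_apply, smul_eq_mul, hiso,
    Fin.prod_univ_three, hg w (J (G 0))]
  linear_combination (c * ε 0 * ε 1 * ε 2) * hA + 2 * ε 0 * ε 1 * ε 2 * hB

theorem twistedGradient_comp_addRight (α : Fin 3) :
    twistedGradient J (fun i ↦ ε (i + α)) (fun i ↦ ν (i + α)) (fun i ↦ G (i + α)) 0 =
      twistedGradient J ε ν G α := by
  simp only [twistedGradient, zero_add, add_comm _ α, add_zero]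

theorem twistedGradientScale_comp_addRight (α : Fin 3) :
    twistedGradientScale g J (fun i ↦ ε (i + α)) (fun i ↦ ν (i + α)) (fun i ↦ G (i + α)) c =
      twistedGradientScale g J ε ν G c := by
  rw [twistedGradientScale, twistedGradientScale,
    ← Equiv.sum_comp (Equiv.addRight α) (fun i ↦ ε i * g (G i) (G i)),
    ← Equiv.sum_comp (Equiv.addRight α) (fun i ↦ ν (i + 2) * g (J (G i)) (G (i + 1)))]
  simp only [Equiv.coe_addRight, add_right_comm _ α]

theorem mul_apply_twistedGradient (hg : ∀ u v, g u v = g v u)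
    (hJ : ∀ u v, g (J u) v = -g u (J v)) (hiso : ∀ u v, g (J u) (J v) = c * (∏ i, ε i) * g u v)
    (hc : ∑ i, ε i * ν i ^ 2 = c) (hN : g (∑ i, (ε i * ν i) • G i) = 0) (α : Fin 3) :
    c * ε α * g (twistedGradient J ε ν G α) (twistedGradient J ε ν G α) =
      (∏ i, ε i) * (c - ε α * ν α ^ 2) * twistedGradientScale g J ε ν G c := by
  have hprod : ∏ i, ε (i + α) = ∏ i, ε i := Equiv.prod_comp (Equiv.addRight α) ε
  have h := mul_apply_twistedGradient_zero (c := c) (ε := fun i ↦ ε (i + α))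
    (ν := fun i ↦ ν (i + α)) (G := fun i ↦ G (i + α)) hg hJ (by rwa [hprod])
    (hc ▸ Equiv.sum_comp (Equiv.addRight α) (fun i ↦ ε i * ν i ^ 2))
    (hN ▸ congrArg g (Equiv.sum_comp (Equiv.addRight α) (fun i ↦ (ε i * ν i) • G i)))
  rwa [twistedGradient_comp_addRight, twistedGradientScale_comp_addRight, hprod, zero_add] at h

end TwistedGradient

end

/-- Lemma 3.2(a): with Xᵢ = J∇νᵢ + εᵢ₊₁εᵢ₊₂(νᵢ₊₂∇νᵢ₊₁ - νᵢ₊₁∇νᵢ₊₂) one has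
(ε_β - ε₃ν_β²)⟨X_α,X_α⟩ = (ε_α - ε₃ν_α²)⟨X_β,X_β⟩ for all α, β. Indices run over Fin 3
(so `2 : Fin 3` plays the role of the index 3). The surface is modeled by a chart ℝ² with
metric field `g`, gradients `G i` characterized by dνᵢ(v) = g(Gᵢ, v), and rotation field
`J` with J² = -ε₁ε₂·id and ⟨Ju,Jv⟩ = ε₁ε₂⟨u,v⟩. -/
theorem stmt7 (ε : Fin 3 → ℝ) (hε : ∀ i, ε i = 1 ∨ ε i = -1)
    (g : (Fin 2 → ℝ) → (Fin 2 → ℝ) →ₗ[ℝ] (Fin 2 → ℝ) →ₗ[ℝ] ℝ)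
    (hgsym : ∀ p u v, g p u v = g p v u)
    (ν : Fin 3 → (Fin 2 → ℝ) → ℝ) (hν : ∀ i, Differentiable ℝ (ν i))
    (G : Fin 3 → (Fin 2 → ℝ) → Fin 2 → ℝ)
    (hG : ∀ i p v, fderiv ℝ (ν i) p v = g p (G i p) v)
    (hsphere : ∀ p, ∑ i, ε i * (ν i p) ^ 2 = ε 2)
    (J : (Fin 2 → ℝ) → (Fin 2 → ℝ) →ₗ[ℝ] (Fin 2 → ℝ))
    (hJsq : ∀ p v, J p (J p v) = -((ε 0 * ε 1) • v))
    (hJiso : ∀ p u v, g p (J p u) (J p v) = ε 0 * ε 1 * g p u v)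
    (X : Fin 3 → (Fin 2 → ℝ) → Fin 2 → ℝ)
    (hX : ∀ i p, X i p = J p (G i p) +
      (ε (i + 1) * ε (i + 2)) • ((ν (i + 2) p) • G (i + 1) p - (ν (i + 1) p) • G (i + 2) p)) :
    ∀ p, ∀ α β : Fin 3,
      (ε β - ε 2 * (ν β p) ^ 2) * g p (X α p) (X α p) =
        (ε α - ε 2 * (ν α p) ^ 2) * g p (X β p) (X β p) := by
  intro p α β
  have hsq : ∀ i, ε i ^ 2 = 1 := fun i ↦ by rcases hε i with h | h <;> norm_num [h]
  have hne : ∀ i, ε i ≠ 0 := fun i ↦ by rcases hε i with h | h <;> norm_num [h]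
  have hskew := LinearMap.BilinForm.apply_map_left_eq_neg_of_sq_eq_neg_smul
    (mul_ne_zero (hne 0) (hne 1)) (hJsq p) (hJiso p)
  have hiso : ∀ u v, g p (J p u) (J p v) = ε 2 * (∏ i, ε i) * g p u v := fun u v ↦ by
    rw [hJiso, Fin.prod_univ_three]
    linear_combination -(ε 0 * ε 1 * g p u v) * hsq 2
  have hN : g p (∑ i, (ε i * ν i p) • G i p) = 0 := by
    refine LinearMap.ext fun v ↦ ?_
    have hv := congrArg (· v) (sum_smul_fderiv_eq_zero_of_sum_sq_const hν hsphere p)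
    simpa [map_sum, hG] using hv
  set ψ := twistedGradientScale (g p) (J p) ε (ν · p) (G · p) (ε 2)
  have hnorm : ∀ α, g p (X α p) (X α p) = (ε α - ε 2 * ν α p ^ 2) * ((∏ i, ε i) * ψ) := by
    intro α
    have h := mul_apply_twistedGradient (hgsym p) hskew hiso (hsphere p) hN α
    rw [show twistedGradient (J p) ε (ν · p) (G · p) α = X α p from (hX α p).symm] at h
    linear_combination ε 2 * ε α * h
      + ((∏ i, ε i) * ψ * ε α - g p (X α p) (X α p) * ε α ^ 2) * hsq 2
      - (g p (X α p) (X α p) + (∏ i, ε i) * ψ * ε 2 * ν α p ^ 2) * hsq α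
  rw [hnorm α, hnorm β]
  ring
end

section
/- Let a₁, a₂, a₃ and b₁, b₂, b₃ be real numbers and let A, B be the 3×3 Vandermonde matrices with rows (1,1,1), (a₁,a₂,a₃), (a₁²,a₂²,a₃²) and (1,1,1), (b₁,b₂,b₃), (b₁²,b₂²,b₃²) respectively. Suppose A and B are invertible and the linear map F = A⁻¹B maps the standard 2-simplex {(x,y,z) : x,y,z ≥ 0, x+y+z = 1} bijectively onto itself. Then F is a permutation matrix; equivalently, (b₁,b₂,b₃) is a permutation of (a₁,a₂,a₃). -/
/-! Both `F = A⁻¹B` and `F⁻¹` map the simplex into itself, so both are entrywise nonnegative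
and `F` is column-stochastic. A nonnegative matrix with a nonnegative inverse is monomial: every
diagonal entry of `F⁻¹F = 1` needs a positive product `F⁻¹ j x * F x j`, while every off-diagonal
entry forces all its products to vanish. Column sums `1` then make `F` a permutation matrix, and
`B = AF` permutes the columns of `A`; its second row gives `b = a ∘ σ`. -/

open Matrix

namespace Matrix

variable {n R : Type*} [Fintype n] [DecidableEq n]

theorem mem_colStochastic_of_mapsTo_stdSimplex [Semiring R] [PartialOrder R] [IsOrderedRing R]
    {M : Matrix n n R} (hM : Set.MapsTo (M *ᵥ ·) (stdSimplex R n) (stdSimplex R n)) :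
    M ∈ colStochastic R n := by
  refine mem_colStochastic_iff_sum.2 ⟨fun i j => ?_, fun j => ?_⟩
  · simpa [mulVec_single_one] using (hM (single_mem_stdSimplex R j)).1 i
  · simpa [mulVec_single_one] using (hM (single_mem_stdSimplex R j)).2

section NonnegInverse

variable [Semiring R] [PartialOrder R] [IsStrictOrderedRing R] {F G : Matrix n n R}
  (hGF : G * F = 1) (hG : ∀ i j, 0 ≤ G i j) (hF : ∀ i j, 0 ≤ F i j)
include hGF hG hF

theorem eq_of_mul_eq_one_of_pos {j x j' : n} (hGx : 0 < G j x) (hFx : 0 < F x j') : j = j' := by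
  by_contra hne
  have hsum : ∑ y, G j y * F y j' = 0 := by
    simpa [mul_apply, one_apply_ne hne] using congrFun (congrFun hGF j) j'
  refine (mul_pos hGx hFx).ne' ?_
  exact (Finset.sum_eq_zero_iff_of_nonneg fun y _ => mul_nonneg (hG j y) (hF y j')).1
    hsum x (Finset.mem_univ x)

theorem exists_perm_of_mul_eq_one_of_nonneg :
    ∃ σ : Equiv.Perm n, ∀ i j, F i j ≠ 0 → σ i = j := by
  have hdiag (j : n) : ∃ x, 0 < G j x ∧ 0 < F x j := by
    have hsum : ∑ x, G j x * F x j ≠ 0 := by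
      simp [← mul_apply, hGF]
    obtain ⟨x, -, hx⟩ := Finset.exists_ne_zero_of_sum_ne_zero hsum
    exact ⟨x, (hG j x).lt_of_ne' (left_ne_zero_of_mul hx),
      (hF x j).lt_of_ne' (right_ne_zero_of_mul hx)⟩
  choose k hGk hFk using hdiag
  have hk_inj : Function.Injective k := fun j j' hjj' =>
    eq_of_mul_eq_one_of_pos hGF hG hF (hGk j) (hjj' ▸ hFk j')
  have hk_bij := Finite.injective_iff_bijective.1 hk_inj
  refine ⟨(Equiv.ofBijective k hk_bij).symm, fun i j hij => ?_⟩
  obtain ⟨j', rfl⟩ := hk_bij.2 i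
  rw [Equiv.ofBijective_symm_apply_apply]
  exact eq_of_mul_eq_one_of_pos hGF hG hF (hGk j') ((hF _ j).lt_of_ne' hij)

end NonnegInverse

theorem eq_permMatrix_of_mem_colStochastic [Semiring R] [PartialOrder R] [IsOrderedRing R]
    {F : Matrix n n R} {σ : Equiv.Perm n} (hF : F ∈ colStochastic R n)
    (hσ : ∀ i j, F i j ≠ 0 → σ i = j) : F = σ.permMatrix R := by
  have hzero (i j : n) (h : σ i ≠ j) : F i j = 0 := not_not.1 (mt (hσ i j) h)
  ext i j
  simp only [Equiv.Perm.permMatrix, PEquiv.toMatrix_apply, Equiv.toPEquiv_apply, Option.mem_def,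
    Option.some_inj]
  split_ifs with h
  · subst h
    rw [← sum_col_of_mem_colStochastic hF, Finset.sum_eq_single i (fun x _ hx => hzero x _ ?_)
      (by simp)]
    exact fun hx' => hx (σ.injective hx')
  · exact hzero i j h

theorem exists_eq_permMatrix_of_mul_eq_one [Semiring R] [PartialOrder R] [IsStrictOrderedRing R]
    {F G : Matrix n n R} (hGF : G * F = 1) (hG : ∀ i j, 0 ≤ G i j)
    (hF : F ∈ colStochastic R n) : ∃ σ : Equiv.Perm n, F = σ.permMatrix R :=
  let ⟨σ, hσ⟩ :=
    exists_perm_of_mul_eq_one_of_nonneg hGF hG fun _ _ => nonneg_of_mem_colStochastic hF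
  ⟨σ, eq_permMatrix_of_mem_colStochastic hF hσ⟩

end Matrix

/-- if the Vandermonde matrices A and B are invertible and F = A⁻¹B maps the
standard 2-simplex bijectively onto itself, then F is a permutation matrix and the bⱼ are a
permutation of the aⱼ. -/
theorem stmt12 (a b : Fin 3 → ℝ) (A B : Matrix (Fin 3) (Fin 3) ℝ)
    (hA : A = Matrix.of fun (i j : Fin 3) => a j ^ (i : ℕ))
    (hB : B = Matrix.of fun (i j : Fin 3) => b j ^ (i : ℕ))
    (hAdet : IsUnit A.det) (hBdet : IsUnit B.det)
    (hbij : Set.BijOn (fun x => (A⁻¹ * B).mulVec x)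
      {x : Fin 3 → ℝ | (∀ i, 0 ≤ x i) ∧ ∑ i, x i = 1}
      {x : Fin 3 → ℝ | (∀ i, 0 ≤ x i) ∧ ∑ i, x i = 1}) :
    ∃ σ : Equiv.Perm (Fin 3), (∀ j, b j = a (σ j)) ∧
      ∀ i j, (A⁻¹ * B) i j = if σ j = i then 1 else 0 := by
  set F := A⁻¹ * B with hF
  have hFdet : IsUnit F.det := by
    rw [hF, det_mul]
    exact (isUnit_nonsing_inv_det A hAdet).mul hBdet
  have hF_inv : Set.MapsTo (F⁻¹ *ᵥ ·) (stdSimplex ℝ (Fin 3)) (stdSimplex ℝ (Fin 3)) :=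
    Set.LeftInvOn.mapsTo (fun x _ => by simp [mulVec_mulVec, nonsing_inv_mul F hFdet])
      hbij.surjOn
  obtain ⟨τ, hFτ⟩ := exists_eq_permMatrix_of_mul_eq_one (nonsing_inv_mul F hFdet)
    (fun _ _ => nonneg_of_mem_colStochastic (mem_colStochastic_of_mapsTo_stdSimplex hF_inv))
    (mem_colStochastic_of_mapsTo_stdSimplex hbij.mapsTo)
  have hBA : B = A.submatrix id τ.symm := by
    rw [← PEquiv.mul_toMatrix_toPEquiv, ← Equiv.Perm.permMatrix, ← hFτ, hF,
      ← Matrix.mul_assoc, mul_nonsing_inv A hAdet, Matrix.one_mul]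
  refine ⟨τ⁻¹, fun j => ?_, fun i j => ?_⟩
  · simpa [hA, hB] using congrFun (congrFun hBA 1) j
  · simp [hFτ, PEquiv.toMatrix_apply, Equiv.eq_symm_apply, eq_comm]
end

section
/- Let ν₁, ν₂, ν₃, c₁, c₂, c₃, ε₁, ε₂, ε₃ be real with εᵢ ∈ {-1,1}, ε₁ν₁² + ε₂ν₂² + ε₃ν₃² = ε₃, and Σcᵢνᵢ² = 0, and suppose the 3×3 matrix with rows (ε₁ν₁, ε₂ν₂, ε₃ν₃), (c₁ν₁, c₂ν₂, c₃ν₃), ((ε₂c₂-ε₃c₃)ν₂ν₃, (ε₃c₃-ε₁c₁)ν₃ν₁, (ε₁c₁-ε₂c₂)ν₁ν₂) is singular. Then ε₁(ε₂c₂-ε₃c₃)²ν₂²ν₃² + ε₂(ε₃c₃-ε₁c₁)²ν₃²ν₁² + ε₃(ε₁c₁-ε₂c₂)²ν₁²ν₂² = 0. -/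
/-!
Expanding along the third row, the determinant is that row dotted with the cross product of the
first two, whose entries are `νⱼνₖ (εⱼcₖ - εₖcⱼ)`. Since `εⱼ² = εₖ² = 1`, we have
`εⱼcₖ - εₖcⱼ = -εⱼεₖ (εⱼcⱼ - εₖcₖ)`, so multiplying the determinant by `-ε₁ε₂ε₃` turns each
product of a third-row entry with a cross-product entry into `εᵢ (εⱼcⱼ - εₖcₖ)² νⱼ² νₖ²`.
-/

open Matrix

section

variable {R : Type*} [CommRing R]

def singularityMatrix (e1 e2 e3 c1 c2 c3 ν1 ν2 ν3 : R) : Matrix (Fin 3) (Fin 3) R :=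
  !![e1 * ν1, e2 * ν2, e3 * ν3;
     c1 * ν1, c2 * ν2, c3 * ν3;
     (e2 * c2 - e3 * c3) * ν2 * ν3, (e3 * c3 - e1 * c1) * ν3 * ν1,
       (e1 * c1 - e2 * c2) * ν1 * ν2]

theorem det_singularityMatrix (e1 e2 e3 c1 c2 c3 ν1 ν2 ν3 : R) :
    (singularityMatrix e1 e2 e3 c1 c2 c3 ν1 ν2 ν3).det =
      (e2 * c2 - e3 * c3) * (e2 * c3 - e3 * c2) * ν2 ^ 2 * ν3 ^ 2 +
        (e3 * c3 - e1 * c1) * (e3 * c1 - e1 * c3) * ν3 ^ 2 * ν1 ^ 2 +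
        (e1 * c1 - e2 * c2) * (e1 * c2 - e2 * c1) * ν1 ^ 2 * ν2 ^ 2 := by
  rw [det_fin_three]
  simp only [singularityMatrix, of_apply, cons_val', cons_val_zero, cons_val_one, cons_val_two,
    empty_val', cons_val_fin_one, head_cons, tail_cons, head_fin_const]
  ring

theorem mul_mul_sub_eq_neg_sub_of_sq_eq_one {a b x y : R} (ha : a ^ 2 = 1) (hb : b ^ 2 = 1) :
    a * b * (a * y - b * x) = -(a * x - b * y) := by
  linear_combination b * y * ha - a * x * hb

theorem neg_mul_det_singularityMatrix {e1 e2 e3 : R} (c1 c2 c3 ν1 ν2 ν3 : R)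
    (h1 : e1 ^ 2 = 1) (h2 : e2 ^ 2 = 1) (h3 : e3 ^ 2 = 1) :
    -(e1 * e2 * e3) * (singularityMatrix e1 e2 e3 c1 c2 c3 ν1 ν2 ν3).det =
      e1 * (e2 * c2 - e3 * c3) ^ 2 * ν2 ^ 2 * ν3 ^ 2 +
        e2 * (e3 * c3 - e1 * c1) ^ 2 * ν3 ^ 2 * ν1 ^ 2 +
        e3 * (e1 * c1 - e2 * c2) ^ 2 * ν1 ^ 2 * ν2 ^ 2 := by
  rw [det_singularityMatrix]
  linear_combination
    (-e1 * (e2 * c2 - e3 * c3) * ν2 ^ 2 * ν3 ^ 2) *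
        mul_mul_sub_eq_neg_sub_of_sq_eq_one (x := c2) (y := c3) h2 h3 +
      (-e2 * (e3 * c3 - e1 * c1) * ν3 ^ 2 * ν1 ^ 2) *
        mul_mul_sub_eq_neg_sub_of_sq_eq_one (x := c3) (y := c1) h3 h1 +
      (-e3 * (e1 * c1 - e2 * c2) * ν1 ^ 2 * ν2 ^ 2) *
        mul_mul_sub_eq_neg_sub_of_sq_eq_one (x := c1) (y := c2) h1 h2

end

theorem stmt14_general (e1 e2 e3 c1 c2 c3 ν1 ν2 ν3 : ℝ)
    (he1 : e1 = 1 ∨ e1 = -1) (he2 : e2 = 1 ∨ e2 = -1) (he3 : e3 = 1 ∨ e3 = -1)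
    (hsing : (!![e1 * ν1, e2 * ν2, e3 * ν3;
                 c1 * ν1, c2 * ν2, c3 * ν3;
                 (e2 * c2 - e3 * c3) * ν2 * ν3, (e3 * c3 - e1 * c1) * ν3 * ν1,
                   (e1 * c1 - e2 * c2) * ν1 * ν2] : Matrix (Fin 3) (Fin 3) ℝ).det = 0) :
    e1 * (e2 * c2 - e3 * c3) ^ 2 * ν2 ^ 2 * ν3 ^ 2 +
      e2 * (e3 * c3 - e1 * c1) ^ 2 * ν3 ^ 2 * ν1 ^ 2 +
      e3 * (e1 * c1 - e2 * c2) ^ 2 * ν1 ^ 2 * ν2 ^ 2 = 0 := by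
  rw [← neg_mul_det_singularityMatrix c1 c2 c3 ν1 ν2 ν3 (sq_eq_one_iff.mpr he1)
    (sq_eq_one_iff.mpr he2) (sq_eq_one_iff.mpr he3)]
  exact mul_eq_zero_of_right _ hsing

/-- Equation (54): if the displayed 3×3 matrix is singular, then
ε₁(ε₂c₂-ε₃c₃)²ν₂²ν₃² + ε₂(ε₃c₃-ε₁c₁)²ν₃²ν₁² + ε₃(ε₁c₁-ε₂c₂)²ν₁²ν₂² = 0. -/
theorem stmt14 (e1 e2 e3 c1 c2 c3 ν1 ν2 ν3 : ℝ)
    (he1 : e1 = 1 ∨ e1 = -1) (he2 : e2 = 1 ∨ e2 = -1) (he3 : e3 = 1 ∨ e3 = -1)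
    (hsphere : e1 * ν1 ^ 2 + e2 * ν2 ^ 2 + e3 * ν3 ^ 2 = e3)
    (hzeta : c1 * ν1 ^ 2 + c2 * ν2 ^ 2 + c3 * ν3 ^ 2 = 0)
    (hsing : (!![e1 * ν1, e2 * ν2, e3 * ν3;
                 c1 * ν1, c2 * ν2, c3 * ν3;
                 (e2 * c2 - e3 * c3) * ν2 * ν3, (e3 * c3 - e1 * c1) * ν3 * ν1,
                   (e1 * c1 - e2 * c2) * ν1 * ν2] : Matrix (Fin 3) (Fin 3) ℝ).det = 0) :
    e1 * (e2 * c2 - e3 * c3) ^ 2 * ν2 ^ 2 * ν3 ^ 2 +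
      e2 * (e3 * c3 - e1 * c1) ^ 2 * ν3 ^ 2 * ν1 ^ 2 +
      e3 * (e1 * c1 - e2 * c2) ^ 2 * ν1 ^ 2 * ν2 ^ 2 = 0 :=
  stmt14_general e1 e2 e3 c1 c2 c3 ν1 ν2 ν3 he1 he2 he3 hsing
end

section
/- Let ε₁c₁, ε₂c₂, ε₃c₃ be pairwise distinct reals with εᵢ ∈ {-1,1}. Consider the quadric Q ⊂ ℝ³ given by ε₁(ε₂c₂-ε₃c₃)²yz + ε₂(ε₃c₃-ε₁c₁)²zx + ε₃(ε₁c₁-ε₂c₂)²xy = 0 and the line L defined by ε₁x + ε₂y + ε₃z = ε₃ and c₁x + c₂y + c₃z = 0 (assumed to be an affine line not through the origin). Then L ∩ Q is finite. -/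
/-- On the line `u+v+w = s`, `a*u+b*v+c*w = 0` (with `a ≠ b`),
the quadric `(b-c)²vw + (c-a)²wu + (a-b)²uv = 0` determines `w` by a linear equation. -/
lemma stmt15_key (a b c s u v w : ℝ)
    (h1 : u + v + w = s) (h2 : a * u + b * v + c * w = 0)
    (hq : (b - c) ^ 2 * (v * w) + (c - a) ^ 2 * (w * u) + (a - b) ^ 2 * (u * v) = 0) :
    s * (a - b) ^ 2 * (b - c) * (a - c) * w = a * b * s ^ 2 * (a - b) ^ 2 := by
  have hU : (a - b) * u = (b - c) * w - b * s := by linear_combination h2 - b * h1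
  have hV : (a - b) * v = a * s - (a - c) * w := by linear_combination a * h1 - h2
  linear_combination (a - b) ^ 2 * hq -
    ((b - c) ^ 2 * w * (a - b) + (a - b) ^ 2 * ((a - b) * u)) * hV -
    ((c - a) ^ 2 * w * (a - b) + (a - b) ^ 2 * (a * s - (a - c) * w)) * hU

/-- with ε₁c₁, ε₂c₂, ε₃c₃ pairwise distinct, the intersection of the affine
line L = {ε₁x + ε₂y + ε₃z = ε₃, c₁x + c₂y + c₃z = 0} (the two linear forms being
independent, so L is an affine line, automatically not through the origin) with the quadric
Q = {ε₁(ε₂c₂-ε₃c₃)²yz + ε₂(ε₃c₃-ε₁c₁)²zx + ε₃(ε₁c₁-ε₂c₂)²xy = 0} is finite. -/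
theorem stmt15 (e1 e2 e3 c1 c2 c3 : ℝ)
    (he1 : e1 = 1 ∨ e1 = -1) (he2 : e2 = 1 ∨ e2 = -1) (he3 : e3 = 1 ∨ e3 = -1)
    (h12 : e1 * c1 ≠ e2 * c2) (h23 : e2 * c2 ≠ e3 * c3) (h13 : e1 * c1 ≠ e3 * c3)
    (hindep : ¬∃ t : ℝ, c1 = t * e1 ∧ c2 = t * e2 ∧ c3 = t * e3) :
    Set.Finite {p : ℝ × ℝ × ℝ |
      (e1 * p.1 + e2 * p.2.1 + e3 * p.2.2 = e3 ∧
        c1 * p.1 + c2 * p.2.1 + c3 * p.2.2 = 0) ∧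
      e1 * (e2 * c2 - e3 * c3) ^ 2 * (p.2.1 * p.2.2) +
        e2 * (e3 * c3 - e1 * c1) ^ 2 * (p.2.2 * p.1) +
        e3 * (e1 * c1 - e2 * c2) ^ 2 * (p.1 * p.2.1) = 0} := by
  have he1sq : e1 * e1 = 1 := by rcases he1 with h | h <;> rw [h] <;> norm_num
  have he2sq : e2 * e2 = 1 := by rcases he2 with h | h <;> rw [h] <;> norm_num
  have he3sq : e3 * e3 = 1 := by rcases he3 with h | h <;> rw [h] <;> norm_num
  have he1ne : e1 ≠ 0 := by rcases he1 with h | h <;> rw [h] <;> norm_num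
  have he2ne : e2 ≠ 0 := by rcases he2 with h | h <;> rw [h] <;> norm_num
  have he3ne : e3 ≠ 0 := by rcases he3 with h | h <;> rw [h] <;> norm_num
  have hab : e1 * c1 - e2 * c2 ≠ 0 := sub_ne_zero.mpr h12
  have hbc : e2 * c2 - e3 * c3 ≠ 0 := sub_ne_zero.mpr h23
  have hac : e1 * c1 - e3 * c3 ≠ 0 := sub_ne_zero.mpr h13
  have hβ : e3 * (e1 * c1 - e2 * c2) ^ 2 * (e2 * c2 - e3 * c3) * (e1 * c1 - e3 * c3) ≠ 0 :=
    mul_ne_zero (mul_ne_zero (mul_ne_zero he3ne (pow_ne_zero 2 hab)) hbc) hac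
  apply Set.Subsingleton.finite
  rintro ⟨x, y, z⟩ ⟨⟨hp1, hp2⟩, hpq⟩ ⟨x', y', z'⟩ ⟨⟨hq1, hq2⟩, hqq⟩
  have key : ∀ X Y Z : ℝ, e1 * X + e2 * Y + e3 * Z = e3 →
      c1 * X + c2 * Y + c3 * Z = 0 →
      e1 * (e2 * c2 - e3 * c3) ^ 2 * (Y * Z) + e2 * (e3 * c3 - e1 * c1) ^ 2 * (Z * X) +
        e3 * (e1 * c1 - e2 * c2) ^ 2 * (X * Y) = 0 →
      e3 * (e1 * c1 - e2 * c2) ^ 2 * (e2 * c2 - e3 * c3) * (e1 * c1 - e3 * c3) * (e3 * Z) =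
        (e1 * c1) * (e2 * c2) * e3 ^ 2 * (e1 * c1 - e2 * c2) ^ 2 ∧
      (e1 * c1 - e2 * c2) * (e1 * X) =
        (e2 * c2 - e3 * c3) * (e3 * Z) - (e2 * c2) * e3 := by
    intro X Y Z h1 h2 hq
    have h2' : (e1 * c1) * (e1 * X) + (e2 * c2) * (e2 * Y) + (e3 * c3) * (e3 * Z) = 0 := by
      linear_combination h2 + (c1 * X) * he1sq + (c2 * Y) * he2sq + (c3 * Z) * he3sq
    have hq' : (e2 * c2 - e3 * c3) ^ 2 * ((e2 * Y) * (e3 * Z)) +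
        (e3 * c3 - e1 * c1) ^ 2 * ((e3 * Z) * (e1 * X)) +
        (e1 * c1 - e2 * c2) ^ 2 * ((e1 * X) * (e2 * Y)) = 0 := by
      linear_combination (e1 * e2 * e3) * hq -
        ((e2 * c2 - e3 * c3) ^ 2 * Y * Z * e2 * e3) * he1sq -
        ((e3 * c3 - e1 * c1) ^ 2 * Z * X * e1 * e3) * he2sq -
        ((e1 * c1 - e2 * c2) ^ 2 * X * Y * e1 * e2) * he3sq
    constructor
    · have := stmt15_key (e1 * c1) (e2 * c2) (e3 * c3) e3
        (e1 * X) (e2 * Y) (e3 * Z) h1 h2'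
        (by linear_combination hq')
      linear_combination this
    · linear_combination h2' - (e2 * c2) * h1
  obtain ⟨kp, hUp⟩ := key x y z hp1 hp2 hpq
  obtain ⟨kq, hUq⟩ := key x' y' z' hq1 hq2 hqq
  have hw : e3 * z = e3 * z' := mul_left_cancel₀ hβ (kp.trans kq.symm)
  have hz : z = z' := mul_left_cancel₀ he3ne hw
  have hu : e1 * x = e1 * x' := by
    apply mul_left_cancel₀ hab
    rw [hUp, hUq, hw]
  have hx : x = x' := mul_left_cancel₀ he1ne hu
  have hy : y = y' := by
    apply mul_left_cancel₀ he2ne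
    have h := hp1.trans hq1.symm
    rw [hx, hz] at h
    linarith
  subst hx; subst hy; subst hz; rfl
end
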